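/- Let M₁ and M₂ be weighted binary matroids with E(M₁) ∩ E(M₂) = {p}, where p is not a loop of either, with nonnegative weights γ₁, γ₂. Then the multivariate Tutte polynomial at q = 2 of the delta-sum satisfies Z̃(M₁ △ M₂; γ) = (Z̃(M₁\p; γ₁), Z̃(M₁/p; γ₁)) · [[2,−1],[−1,1]] · (Z̃(M₂\p; γ₂), Z̃(M₂/p; γ₂))ᵀ, where γ is the weighting on E(M₁ △ M₂) inherited from γ₁ and γ₂. -/

import Mathlib

/-!
For `A₁ ⊆ E₁` and `A₂ ⊆ E₂`, the cycles of `M₁ △ M₂` inside `A₁ ∪ A₂` are exactly the sums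
`c₁ + c₂` of cycles `cᵢ` of `Mᵢ` inside `Aᵢ ∪ {p}` with `c₁ p = c₂ p`, and as `p` is not a loop
these two cycle spaces meet trivially. Counting dimensions gives
`r(A₁ ∪ A₂) = r₁(A₁) + r₂(A₂) - ε₁ ε₂`, where `εᵢ ∈ {0, 1}` records whether `p` lies in the
closure of `Aᵢ` in `Mᵢ`, while `rᵢ(Aᵢ ∪ {p}) - 1 = rᵢ(Aᵢ) - εᵢ`. The formula then holds term by
term, by `2 ^ (a b) = 2 - 2 ^ a - 2 ^ b + 2 ^ (a + b)` for `a, b ∈ {0, 1}`.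
-/

open Finset

/-- Vectors in GF(2)^α vanishing outside A. -/
noncomputable def supportedOn {α : Type*} [Fintype α] [DecidableEq α] (A : Finset α) :
    Submodule (ZMod 2) (α → ZMod 2) :=
  Submodule.pi (↑(Aᶜ)) fun _ => ⊥

/-- Rank function of the binary matroid with cycle space 𝒞. -/
noncomputable def rk {α : Type*} [Fintype α] [DecidableEq α]
    (𝒞 : Submodule (ZMod 2) (α → ZMod 2)) (A : Finset α) : ℤ :=
  (A.card : ℤ) - Module.finrank (ZMod 2) ↥(𝒞 ⊓ supportedOn A)

/-- The multivariate Tutte polynomial at q = 2 of the binary matroid with cycle space 𝒞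
and ground set E. -/
noncomputable def Zt {α : Type*} [Fintype α] [DecidableEq α]
    (𝒞 : Submodule (ZMod 2) (α → ZMod 2)) (γ : α → ℝ) (E : Finset α) : ℝ :=
  ∑ A ∈ E.powerset, (∏ e ∈ A, γ e) * (2 : ℝ) ^ (-rk 𝒞 A)

theorem sum_powerset_union_of_disjoint {α M : Type*} [DecidableEq α] [AddCommMonoid M]
    {s t : Finset α} (h : Disjoint s t) (f : Finset α → M) :
    ∑ A ∈ (s ∪ t).powerset, f A = ∑ A ∈ s.powerset, ∑ B ∈ t.powerset, f (A ∪ B) := by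
  have inter_union : ∀ A ⊆ s ∪ t, A ∩ s ∪ A ∩ t = A := fun A hA => by
    rw [← inter_union_distrib_left, inter_eq_left.2 hA]
  rw [← sum_product']
  refine sum_nbij' (fun A => (A ∩ s, A ∩ t)) (fun P => P.1 ∪ P.2) ?_ ?_ ?_ ?_ ?_
  · simp
  · rintro ⟨A, B⟩ hAB
    rw [mem_product, mem_powerset, mem_powerset] at hAB
    exact mem_powerset.2 (union_subset_union hAB.1 hAB.2)
  · exact fun A hA => inter_union A (mem_powerset.1 hA)
  · rintro ⟨A, B⟩ hAB
    obtain ⟨hA, hB⟩ : A ⊆ s ∧ B ⊆ t := by simpa using hAB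
    simp only [union_inter_distrib_right, inter_eq_left.2 hA, inter_eq_left.2 hB,
      disjoint_iff_inter_eq_empty.1 (h.symm.mono_left hB),
      disjoint_iff_inter_eq_empty.1 (h.mono_left hA), union_empty, empty_union]
  · exact fun A hA => by rw [inter_union A (mem_powerset.1 hA)]

theorem finrank_inf_ker_proj_add_finrank_map_proj {K ι : Type*} [Field K] [Finite ι]
    (W : Submodule K (ι → K)) (i : ι) :
    Module.finrank K ↥(W ⊓ LinearMap.ker (LinearMap.proj i)) +
      Module.finrank K ↥(W.map (LinearMap.proj i)) = Module.finrank K W := by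
  have := ((LinearMap.proj (R := K) (φ := fun _ : ι => K) i).domRestrict W)
    |>.finrank_range_add_finrank_ker
  rw [LinearMap.range_domRestrict, LinearMap.ker_domRestrict] at this
  rw [← this, add_comm, (Submodule.comapSubtypeEquivOfLe inf_le_left).finrank_eq.symm,
    Submodule.comap_inf, Submodule.comap_subtype_self, top_inf_eq]

theorem two_zpow_neg_sub_finrank_inf {K : Type*} [Field K] (S₁ S₂ : Submodule K K) (r₁ r₂ : ℤ) :
    (2 : ℝ) ^ (-(r₁ + r₂ - Module.finrank K ↥(S₁ ⊓ S₂))) =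
      2 * 2 ^ (-r₁) * 2 ^ (-r₂) - 2 ^ (-r₁) * 2 ^ (-(r₂ - Module.finrank K S₂))
        - 2 ^ (-(r₁ - Module.finrank K S₁)) * 2 ^ (-r₂)
        + 2 ^ (-(r₁ - Module.finrank K S₁)) * 2 ^ (-(r₂ - Module.finrank K S₂)) := by
  have h (r : ℤ) (d : ℕ) : (2 : ℝ) ^ (-(r - d)) = 2 ^ (-r) * 2 ^ d := by
    rw [neg_sub, sub_eq_add_neg, add_comm, zpow_add₀ two_ne_zero, zpow_natCast]
  rw [h, h, h, neg_add, zpow_add₀ two_ne_zero]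
  rcases eq_bot_or_eq_top S₁ with rfl | rfl <;> rcases eq_bot_or_eq_top S₂ with rfl | rfl <;>
    (first | rw [bot_inf_eq] | rw [inf_bot_eq] | rw [inf_top_eq]) <;>
    simp only [finrank_bot, finrank_top, Module.finrank_self] <;> ring

section

variable {α : Type*} [Fintype α] [DecidableEq α]

theorem mem_supportedOn {A : Finset α} {x : α → ZMod 2} :
    x ∈ supportedOn A ↔ ∀ i ∉ A, x i = 0 := by
  simp [supportedOn, Submodule.mem_pi]

theorem supportedOn_mono {A B : Finset α} (h : A ⊆ B) : supportedOn A ≤ supportedOn B :=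
  fun _ hx => mem_supportedOn.2 fun i hi => mem_supportedOn.1 hx i fun hA => hi (h hA)

theorem supportedOn_insert_inf_ker_proj {A : Finset α} {p : α} (hp : p ∉ A) :
    supportedOn (insert p A) ⊓ LinearMap.ker (LinearMap.proj p) = supportedOn A := by
  ext x
  simp only [Submodule.mem_inf, mem_supportedOn, LinearMap.mem_ker, LinearMap.proj_apply,
    mem_insert, not_or]
  refine ⟨fun ⟨hx, hxp⟩ i hi => ?_, fun hx => ⟨fun i hi => hx i hi.2, hx p hp⟩⟩
  by_cases hip : i = p
  · exact hip ▸ hxp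
  · exact hx i ⟨hip, hi⟩

theorem rk_inf_supportedOn (𝒞 : Submodule (ZMod 2) (α → ZMod 2)) {A E : Finset α} (h : A ⊆ E) :
    rk (𝒞 ⊓ supportedOn E) A = rk 𝒞 A := by
  rw [rk, rk, inf_assoc, inf_eq_right.2 (supportedOn_mono h)]

/-- `traceAt 𝒞 A p` is `⊤` when `p` lies in the closure of `A` (some cycle inside `A ∪ {p}`
passes through `p`) and `⊥` otherwise. -/
noncomputable def traceAt (𝒞 : Submodule (ZMod 2) (α → ZMod 2)) (A : Finset α) (p : α) :
    Submodule (ZMod 2) (ZMod 2) :=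
  (𝒞 ⊓ supportedOn (insert p A)).map (LinearMap.proj p)

theorem finrank_inf_supportedOn_insert (𝒞 : Submodule (ZMod 2) (α → ZMod 2)) {A : Finset α}
    {p : α} (hp : p ∉ A) :
    Module.finrank (ZMod 2) ↥(𝒞 ⊓ supportedOn (insert p A)) =
      Module.finrank (ZMod 2) ↥(𝒞 ⊓ supportedOn A) + Module.finrank (ZMod 2) (traceAt 𝒞 A p) := by
  rw [← finrank_inf_ker_proj_add_finrank_map_proj, inf_assoc, supportedOn_insert_inf_ker_proj hp,
    traceAt]

theorem rk_insert_sub_one (𝒞 : Submodule (ZMod 2) (α → ZMod 2)) {A : Finset α} {p : α}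
    (hp : p ∉ A) :
    rk 𝒞 (insert p A) - 1 = rk 𝒞 A - Module.finrank (ZMod 2) (traceAt 𝒞 A p) := by
  rw [rk, rk, card_insert_of_notMem hp, finrank_inf_supportedOn_insert 𝒞 hp]
  push_cast
  ring

theorem disjoint_inf_supportedOn_insert {𝒞 : Submodule (ZMod 2) (α → ZMod 2)}
    {A₁ A₂ : Finset α} {p : α} (hA : Disjoint A₁ A₂) (hloop : Pi.single p 1 ∉ 𝒞) :
    Disjoint (𝒞 ⊓ supportedOn (insert p A₁)) (supportedOn (insert p A₂)) := by
  rw [Submodule.disjoint_def]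
  rintro x ⟨hx𝒞, hx₁⟩ hx₂
  have hx : x = Pi.single p (x p) := by
    funext i
    by_cases hip : i = p
    · simp [hip]
    · rw [Pi.single_eq_of_ne hip]
      by_cases hi : i ∈ A₁
      · exact mem_supportedOn.1 hx₂ i (by simp [hip, disjoint_left.1 hA hi])
      · exact mem_supportedOn.1 hx₁ i (by simp [hip, hi])
  rw [hx]
  generalize x p = c at hx
  fin_cases c
  · exact Pi.single_zero p
  · exact absurd (hx ▸ hx𝒞) hloop

theorem mem_supportedOn_insert_of_add_mem {E₁ E₂ A₁ A₂ : Finset α} {p : α}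
    {c₁ c₂ : α → ZMod 2} (hE : Disjoint E₁ E₂) (hA₂ : A₂ ⊆ E₂)
    (hc₁ : c₁ ∈ supportedOn (insert p E₁)) (hc₂ : c₂ ∈ supportedOn (insert p E₂))
    (h : c₁ + c₂ ∈ supportedOn (A₁ ∪ A₂)) : c₁ ∈ supportedOn (insert p A₁) := by
  refine mem_supportedOn.2 fun i hi => ?_
  rw [mem_insert, not_or] at hi
  by_cases hiE : i ∈ E₁
  · have hiE₂ : i ∉ E₂ := disjoint_left.1 hE hiE
    have hc₂i : c₂ i = 0 := mem_supportedOn.1 hc₂ i (by simp [hi.1, hiE₂])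
    simpa [hc₂i] using mem_supportedOn.1 h i (by simp [hi.2, mt (@hA₂ i) hiE₂])
  · exact mem_supportedOn.1 hc₁ i (by simp [hi.1, hiE])

theorem sup_inf_supportedOn_union {𝒞₁ 𝒞₂ : Submodule (ZMod 2) (α → ZMod 2)}
    {E₁ E₂ A₁ A₂ : Finset α} {p : α}
    (h₁ : 𝒞₁ ≤ supportedOn (insert p E₁)) (h₂ : 𝒞₂ ≤ supportedOn (insert p E₂))
    (hE : Disjoint E₁ E₂) (hA₁ : A₁ ⊆ E₁) (hA₂ : A₂ ⊆ E₂) (hp : p ∉ A₁ ∪ A₂) :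
    (𝒞₁ ⊔ 𝒞₂) ⊓ supportedOn (A₁ ∪ A₂) =
      (𝒞₁ ⊓ supportedOn (insert p A₁) ⊔ 𝒞₂ ⊓ supportedOn (insert p A₂)) ⊓
        LinearMap.ker (LinearMap.proj p) := by
  apply le_antisymm
  · rintro x ⟨hx, hxA⟩
    obtain ⟨c₁, hc₁, c₂, hc₂, rfl⟩ := Submodule.mem_sup.1 hx
    refine ⟨Submodule.mem_sup.2 ⟨c₁, ⟨hc₁, ?_⟩, c₂, ⟨hc₂, ?_⟩, rfl⟩,
      mem_supportedOn.1 hxA p hp⟩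
    · exact mem_supportedOn_insert_of_add_mem hE hA₂ (h₁ hc₁) (h₂ hc₂) hxA
    · rw [add_comm, union_comm] at hxA
      exact mem_supportedOn_insert_of_add_mem hE.symm hA₁ (h₂ hc₂) (h₁ hc₁) hxA
  · rintro x ⟨hx, hxp⟩
    obtain ⟨c₁, hc₁, c₂, hc₂, rfl⟩ := Submodule.mem_sup.1 hx
    refine ⟨Submodule.add_mem_sup hc₁.1 hc₂.1, ?_⟩
    rw [← supportedOn_insert_inf_ker_proj hp, insert_union_distrib]
    exact ⟨add_mem (supportedOn_mono subset_union_left hc₁.2)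
      (supportedOn_mono subset_union_right hc₂.2), hxp⟩

theorem rk_deltaSum {𝒞₁ 𝒞₂ : Submodule (ZMod 2) (α → ZMod 2)} {E₁ E₂ A₁ A₂ : Finset α}
    {p : α} (h₁ : 𝒞₁ ≤ supportedOn (insert p E₁)) (h₂ : 𝒞₂ ≤ supportedOn (insert p E₂))
    (hE : Disjoint E₁ E₂) (hp₁ : p ∉ E₁) (hp₂ : p ∉ E₂) (hloop : Pi.single p 1 ∉ 𝒞₁)
    (hA₁ : A₁ ⊆ E₁) (hA₂ : A₂ ⊆ E₂) :
    rk ((𝒞₁ ⊔ 𝒞₂) ⊓ supportedOn (E₁ ∪ E₂)) (A₁ ∪ A₂) =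
      rk 𝒞₁ A₁ + rk 𝒞₂ A₂ - Module.finrank (ZMod 2) ↥(traceAt 𝒞₁ A₁ p ⊓ traceAt 𝒞₂ A₂ p) := by
  have hp₁' : p ∉ A₁ := mt (@hA₁ p) hp₁
  have hp₂' : p ∉ A₂ := mt (@hA₂ p) hp₂
  have hW : 𝒞₁ ⊓ supportedOn (insert p A₁) ⊓ (𝒞₂ ⊓ supportedOn (insert p A₂)) = ⊥ :=
    ((disjoint_inf_supportedOn_insert (hE.mono hA₁ hA₂) hloop).mono_right inf_le_right).eq_bot
  have hsup := Submodule.finrank_sup_add_finrank_inf_eq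
    (𝒞₁ ⊓ supportedOn (insert p A₁)) (𝒞₂ ⊓ supportedOn (insert p A₂))
  rw [hW, finrank_bot, finrank_inf_supportedOn_insert 𝒞₁ hp₁',
    finrank_inf_supportedOn_insert 𝒞₂ hp₂'] at hsup
  have htrace := Submodule.finrank_sup_add_finrank_inf_eq (traceAt 𝒞₁ A₁ p) (traceAt 𝒞₂ A₂ p)
  have hker : Module.finrank (ZMod 2) ↥((𝒞₁ ⊔ 𝒞₂) ⊓ supportedOn (A₁ ∪ A₂)) +
      Module.finrank (ZMod 2) ↥(traceAt 𝒞₁ A₁ p ⊔ traceAt 𝒞₂ A₂ p) =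
      Module.finrank (ZMod 2)
        ↥(𝒞₁ ⊓ supportedOn (insert p A₁) ⊔ 𝒞₂ ⊓ supportedOn (insert p A₂)) := by
    rw [traceAt, traceAt, ← Submodule.map_sup,
      sup_inf_supportedOn_union h₁ h₂ hE hA₁ hA₂ (by simp [hp₁', hp₂'])]
    exact finrank_inf_ker_proj_add_finrank_map_proj _ p
  rw [rk_inf_supportedOn _ (union_subset_union hA₁ hA₂), rk, rk, rk,
    card_union_of_disjoint (hE.mono hA₁ hA₂)]
  omega

end

/-- The delta-sum `M₁ △ M₂` is encoded by its cycle space `(𝒞₁ ⊔ 𝒞₂) ⊓ supportedOn (E₁ ∪ E₂)`;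
the sums over `insert p A` are `Z̃(Mᵢ/p; γᵢ)`, since `r_{M/p}(A) = r(A ∪ {p}) - 1`. -/
theorem stmt_5_general {α : Type*} [Fintype α] [DecidableEq α]
    (E₁ E₂ : Finset α) (p : α)
    (hdisj : Disjoint E₁ E₂) (hp₁ : p ∉ E₁) (hp₂ : p ∉ E₂)
    (𝒞₁ 𝒞₂ : Submodule (ZMod 2) (α → ZMod 2))
    (hsupp₁ : ∀ x ∈ 𝒞₁, ∀ i, i ∉ insert p E₁ → x i = 0)
    (hsupp₂ : ∀ x ∈ 𝒞₂, ∀ i, i ∉ insert p E₂ → x i = 0)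
    (hloop₁ : (fun i => if i = p then (1 : ZMod 2) else 0) ∉ 𝒞₁)
    (γ₁ γ₂ : α → ℝ)
    (γ : α → ℝ) (hγ : ∀ e ∈ E₁, γ e = γ₁ e) (hγ' : ∀ e ∈ E₂, γ e = γ₂ e) :
    Zt ((𝒞₁ ⊔ 𝒞₂) ⊓ supportedOn (E₁ ∪ E₂)) γ (E₁ ∪ E₂) =
      2 * Zt 𝒞₁ γ₁ E₁ * Zt 𝒞₂ γ₂ E₂
      - Zt 𝒞₁ γ₁ E₁ *
          (∑ A ∈ E₂.powerset, (∏ e ∈ A, γ₂ e) * (2 : ℝ) ^ (-(rk 𝒞₂ (insert p A) - 1)))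
      - (∑ A ∈ E₁.powerset, (∏ e ∈ A, γ₁ e) * (2 : ℝ) ^ (-(rk 𝒞₁ (insert p A) - 1))) *
          Zt 𝒞₂ γ₂ E₂
      + (∑ A ∈ E₁.powerset, (∏ e ∈ A, γ₁ e) * (2 : ℝ) ^ (-(rk 𝒞₁ (insert p A) - 1))) *
          (∑ A ∈ E₂.powerset, (∏ e ∈ A, γ₂ e) * (2 : ℝ) ^ (-(rk 𝒞₂ (insert p A) - 1))) := by
  have h₁ : 𝒞₁ ≤ supportedOn (insert p E₁) := fun x hx => mem_supportedOn.2 (hsupp₁ x hx)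
  have h₂ : 𝒞₂ ≤ supportedOn (insert p E₂) := fun x hx => mem_supportedOn.2 (hsupp₂ x hx)
  have hloop : Pi.single p 1 ∉ 𝒞₁ := by
    rwa [← funext fun i => Pi.single_apply p (1 : ZMod 2) i] at hloop₁
  rw [Zt, Zt, Zt, sum_powerset_union_of_disjoint hdisj, mul_assoc, sum_mul_sum, sum_mul_sum,
    sum_mul_sum, sum_mul_sum]
  simp only [mul_sum, ← sum_sub_distrib, ← sum_add_distrib]
  refine sum_congr rfl fun A₁ hA₁ => sum_congr rfl fun A₂ hA₂ => ?_
  rw [mem_powerset] at hA₁ hA₂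
  rw [prod_union (hdisj.mono hA₁ hA₂), prod_congr rfl fun e he => hγ e (hA₁ he),
    prod_congr rfl fun e he => hγ' e (hA₂ he), rk_deltaSum h₁ h₂ hdisj hp₁ hp₂ hloop hA₁ hA₂,
    rk_insert_sub_one 𝒞₁ (mt (@hA₁ p) hp₁), rk_insert_sub_one 𝒞₂ (mt (@hA₂ p) hp₂),
    two_zpow_neg_sub_finrank_inf]
  ring

/-- 2-sum splitting formula at q = 2.  M₁, M₂ are weighted binary matroids, given by
cycle spaces 𝒞₁, 𝒞₂ with ground sets E₁ ∪ {p} and E₂ ∪ {p}, sharing only the non-loop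
element p, with nonnegative weights.  The delta-sum M₁ △ M₂ is the binary matroid on
E₁ ∪ E₂ whose cycle space is {C₁ ⊕ C₂ : Cᵢ ∈ 𝒞ᵢ} (i.e. (𝒞₁ ⊔ 𝒞₂) ∩ {vanish on p}),
weighted by γ inherited from γ₁, γ₂.  Then
Z̃(M₁ △ M₂;γ) = (Z̃(M₁\p), Z̃(M₁/p)) [[2,−1],[−1,1]] (Z̃(M₂\p), Z̃(M₂/p))ᵀ,
where Z̃(Mᵢ\p;γᵢ) = Σ_{A ⊆ Eᵢ} γ_A 2^{−rᵢ(A)} and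
Z̃(Mᵢ/p;γᵢ) = Σ_{A ⊆ Eᵢ} γ_A 2^{−(rᵢ(A ∪ {p}) − 1)}. -/
theorem stmt_5 {α : Type*} [Fintype α] [DecidableEq α]
    (E₁ E₂ : Finset α) (p : α)
    (hdisj : Disjoint E₁ E₂) (hp₁ : p ∉ E₁) (hp₂ : p ∉ E₂)
    (𝒞₁ 𝒞₂ : Submodule (ZMod 2) (α → ZMod 2))
    (hsupp₁ : ∀ x ∈ 𝒞₁, ∀ i, i ∉ insert p E₁ → x i = 0)
    (hsupp₂ : ∀ x ∈ 𝒞₂, ∀ i, i ∉ insert p E₂ → x i = 0)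
    (hloop₁ : (fun i => if i = p then (1 : ZMod 2) else 0) ∉ 𝒞₁)
    (hloop₂ : (fun i => if i = p then (1 : ZMod 2) else 0) ∉ 𝒞₂)
    (γ₁ γ₂ : α → ℝ) (hγ₁ : ∀ e, 0 ≤ γ₁ e) (hγ₂ : ∀ e, 0 ≤ γ₂ e)
    (γ : α → ℝ) (hγ : ∀ e ∈ E₁, γ e = γ₁ e) (hγ' : ∀ e ∈ E₂, γ e = γ₂ e) :
    Zt ((𝒞₁ ⊔ 𝒞₂) ⊓ supportedOn (E₁ ∪ E₂)) γ (E₁ ∪ E₂) =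
      2 * Zt 𝒞₁ γ₁ E₁ * Zt 𝒞₂ γ₂ E₂
      - Zt 𝒞₁ γ₁ E₁ *
          (∑ A ∈ E₂.powerset, (∏ e ∈ A, γ₂ e) * (2 : ℝ) ^ (-(rk 𝒞₂ (insert p A) - 1)))
      - (∑ A ∈ E₁.powerset, (∏ e ∈ A, γ₁ e) * (2 : ℝ) ^ (-(rk 𝒞₁ (insert p A) - 1))) *
          Zt 𝒞₂ γ₂ E₂
      + (∑ A ∈ E₁.powerset, (∏ e ∈ A, γ₁ e) * (2 : ℝ) ^ (-(rk 𝒞₁ (insert p A) - 1))) *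
          (∑ A ∈ E₂.powerset, (∏ e ∈ A, γ₂ e) * (2 : ℝ) ^ (-(rk 𝒞₂ (insert p A) - 1))) :=
  stmt_5_general E₁ E₂ p hdisj hp₁ hp₂ 𝒞₁ 𝒞₂ hsupp₁ hsupp₂ hloop₁ γ₁ γ₂ γ hγ hγ'
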